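/- arXiv:1908.08208 — 2 statements merged into one kernel-verified Lean document; each statement's English description precedes it below -/
import Mathlib

section
/- The unique fixed point p* of T in [u0, v0] is strictly increasing on [0,1]: for all s1, s2 ∈ [0,1] with s1 < s2 one has p*(s1) < p*(s2). -/
/-! If `p* b ≤ p* a` for some `0 < a < b ≤ 1`, let `t₀ ∈ (a, b]` minimise `p*` on `[a, b]` and let
`(k, t)` be an optimal split at `t₀` (the infimum defining `T` is attained: `g → ∞` and everything
is continuous). If `t ≤ a`, the same split is available at `a` and is strictly cheaper there, as
`c` is strictly increasing; if `k = 1`, then `p* t₀ ≥ δ p* t ≥ δ p* t₀ > p* t₀`. Hence `a < t`,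
`k ≥ 2`, and comparing with the split `(k, a)` at `a` gives `p*(t/k) ≤ p*(a/k)`: a new decreasing
pair, at most half as far from `0`. On the other hand `c a ≥ p* a ≥ p* t₀ ≥ δ k p*(t/k) ≥ δ c'(0) t`,
so `δ c'(0) a < c a`, which fails for small `a > 0` because `c'(0) < δ c'(0)`. -/

open Set Filter

noncomputable def Tmap (c : ℝ → ℝ) (g : ℕ → ℝ) (δ : ℝ) (p : ℝ → ℝ) (s : ℝ) : ℝ :=
  sInf {y : ℝ | ∃ k : ℕ, ∃ t : ℝ, 1 ≤ k ∧ 0 ≤ t ∧ t ≤ s ∧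
    y = c (s - t) + g k + δ * k * p (t / k)}

open Topology

theorem HasDerivAt.eventually_lt_mul_of_map_zero {f : ℝ → ℝ} {f' L : ℝ}
    (hf : HasDerivAt f f' 0) (hf0 : f 0 = 0) (hL : f' < L) :
    ∀ᶠ x in 𝓝[>] 0, f x < L * x := by
  filter_upwards [hf.hasDerivWithinAt.limsup_slope_le' (lt_irrefl (0 : ℝ)) hL, self_mem_nhdsWithin]
    with x hslope (hx : 0 < x)
  rw [slope_def_field, hf0, sub_zero, sub_zero, div_lt_iff₀ hx] at hslope
  exact hslope

theorem exists_lt_of_forall_exists_le_half {S : ℝ → Prop}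
    (h : ∀ b, S b → ∃ b' ≤ b / 2, S b') {b : ℝ} (hb : S b) {ε : ℝ} (hε : 0 < ε) :
    ∃ b' < ε, S b' := by
  have hiter : ∀ n : ℕ, ∃ b' ≤ b * (1 / 2) ^ n, S b' := by
    intro n
    induction n with
    | zero => exact ⟨b, by simp, hb⟩
    | succ n ih =>
      obtain ⟨b₁, hb₁, hS₁⟩ := ih
      obtain ⟨b₂, hb₂, hS₂⟩ := h b₁ hS₁
      exact ⟨b₂, by rw [pow_succ]; linarith, hS₂⟩
  have hsmall : Tendsto (fun n : ℕ => b * (1 / 2 : ℝ) ^ n) atTop (𝓝 0) := by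
    simpa using (tendsto_pow_atTop_nhds_zero_of_lt_one (by norm_num : (0 : ℝ) ≤ 1 / 2)
      (by norm_num)).const_mul b
  obtain ⟨n, hn⟩ := (hsmall.eventually (gt_mem_nhds hε)).exists
  obtain ⟨b', hb', hS⟩ := hiter n
  exact ⟨b', hb'.trans_lt hn, hS⟩

theorem exists_mem_Ioc_isMinOn {α β : Type*} [LinearOrder α] [TopologicalSpace α]
    [CompactIccSpace α] [LinearOrder β] [TopologicalSpace β] [ClosedIicTopology β] {f : α → β}
    {a b : α} (hf : ContinuousOn f (Icc a b)) (hab : a < b) (hfab : f b ≤ f a) :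
    ∃ t₀ ∈ Ioc a b, IsMinOn f (Icc a b) t₀ := by
  obtain ⟨t₁, ht₁, hmin⟩ := isCompact_Icc.exists_isMinOn (nonempty_Icc.2 hab.le) hf
  rcases ht₁.1.eq_or_lt with rfl | hat₁
  · exact ⟨b, ⟨hab, le_rfl⟩, fun x hx => hfab.trans (hmin hx)⟩
  · exact ⟨t₁, ⟨hat₁, ht₁.2⟩, hmin⟩

theorem div_natCast_mem_Icc {t : ℝ} (ht : t ∈ Icc (0 : ℝ) 1) {k : ℕ} (hk : 1 ≤ k) :
    t / k ∈ Icc (0 : ℝ) 1 := by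
  have hk' : (1 : ℝ) ≤ k := by exact_mod_cast hk
  exact ⟨div_nonneg ht.1 (by linarith), div_le_one_of_le₀ (ht.2.trans hk') (by linarith)⟩

def TmapCandidates (c : ℝ → ℝ) (g : ℕ → ℝ) (δ : ℝ) (p : ℝ → ℝ) (s : ℝ) : Set ℝ :=
  {y : ℝ | ∃ k : ℕ, ∃ t : ℝ, 1 ≤ k ∧ 0 ≤ t ∧ t ≤ s ∧ y = c (s - t) + g k + δ * k * p (t / k)}

section Tmap

variable {c : ℝ → ℝ} {g : ℕ → ℝ} {δ μ : ℝ} {p : ℝ → ℝ}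

theorem isLeast_Tmap (hc : ContinuousOn c (Icc 0 1)) (hc_nonneg : ∀ x ∈ Icc (0 : ℝ) 1, 0 ≤ c x)
    (hg_top : Tendsto g atTop atTop) (hδ : 0 ≤ δ)
    (hp : ContinuousOn p (Icc 0 1)) (hp_nonneg : ∀ x ∈ Icc (0 : ℝ) 1, 0 ≤ p x)
    {s : ℝ} (hs : s ∈ Icc (0 : ℝ) 1) :
    IsLeast (TmapCandidates c g δ p s) (Tmap c g δ p s) := by
  set F : ℕ × ℝ → ℝ := fun x => c (s - x.2) + g x.1 + δ * x.1 * p (x.2 / x.1)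
  -- beyond `K`, the fixed cost `g k` alone exceeds the candidate `(k, t) = (1, 0)`
  obtain ⟨K, hK⟩ := ((hg_top.eventually_gt_atTop (F (1, 0))).and
    (eventually_ge_atTop 1)).exists_forall_of_atTop
  set D : Set (ℕ × ℝ) := Icc 1 K ×ˢ Icc 0 s
  have hD : IsCompact D := (finite_Icc 1 K).isCompact.prod isCompact_Icc
  have h10 : ((1 : ℕ), (0 : ℝ)) ∈ D := ⟨⟨le_rfl, (hK K le_rfl).2⟩, le_rfl, hs.1⟩
  have hFcont : ContinuousOn F D := by
    have hcast : Continuous fun x : ℕ × ℝ => (x.1 : ℝ) :=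
      continuous_of_discreteTopology.comp continuous_fst
    refine ((hc.comp (continuous_const.sub continuous_snd).continuousOn ?_).add
      (continuous_of_discreteTopology.comp continuous_fst).continuousOn).add
      (continuousOn_const.mul hcast.continuousOn |>.mul (hp.comp
        (continuous_snd.continuousOn.div hcast.continuousOn ?_) ?_))
    · rintro x ⟨-, ht0, hts⟩
      show s - x.2 ∈ Icc 0 1
      exact ⟨by linarith, by linarith [hs.2]⟩
    · rintro x ⟨hk, -⟩
      exact Nat.cast_ne_zero.mpr (Nat.one_le_iff_ne_zero.mp hk.1)
    · rintro x ⟨hk, ht0, hts⟩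
      exact div_natCast_mem_Icc ⟨ht0, hts.trans hs.2⟩ hk.1
  obtain ⟨x₀, hx₀, hmin⟩ := hD.exists_isMinOn ⟨_, h10⟩ hFcont
  have hleast : IsLeast (TmapCandidates c g δ p s) (F x₀) := by
    refine ⟨⟨x₀.1, x₀.2, hx₀.1.1, hx₀.2.1, hx₀.2.2, rfl⟩, ?_⟩
    rintro y ⟨k, t, hk, ht0, hts, rfl⟩
    by_cases hkK : k ≤ K
    · exact hmin (show (k, t) ∈ D from ⟨⟨hk, hkK⟩, ht0, hts⟩)
    · have hc_st := hc_nonneg (s - t) ⟨by linarith, by linarith [hs.2]⟩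
      have hp_tk := mul_nonneg (mul_nonneg hδ k.cast_nonneg)
        (hp_nonneg _ (div_natCast_mem_Icc ⟨ht0, hts.trans hs.2⟩ hk))
      calc F x₀ ≤ F (1, 0) := hmin h10
        _ ≤ g k := (hK k (by omega)).1.le
        _ ≤ _ := by linarith
  rw [show Tmap c g δ p s = F x₀ from hleast.csInf_eq]
  exact hleast

theorem descent_of_isLeast (hc_mono : StrictMonoOn c (Icc 0 1)) (hc0 : c 0 = 0)
    (hg : ∀ k : ℕ, 1 ≤ k → 0 ≤ g k) (hδ : 1 < δ) (hμ : 0 < μ) (hp : ContinuousOn p (Icc 0 1))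
    (hp_bounds : ∀ s ∈ Icc (0 : ℝ) 1, μ * s ≤ p s ∧ p s ≤ c s)
    (hfix : ∀ s ∈ Icc (0 : ℝ) 1, IsLeast (TmapCandidates c g δ p s) (p s))
    {a b : ℝ} (ha : 0 < a) (hab : a < b) (hb : b ≤ 1) (hpab : p b ≤ p a) :
    δ * μ * a < c a ∧ ∃ k : ℕ, 2 ≤ k ∧ ∃ t, a < t ∧ t ≤ b ∧ p (t / k) ≤ p (a / k) := by
  obtain ⟨t₀, ⟨hat₀, ht₀b⟩, hmin⟩ :=
    exists_mem_Ioc_isMinOn (hp.mono (Icc_subset_Icc ha.le hb)) hab hpab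
  have ha1 : a ∈ Icc (0 : ℝ) 1 := ⟨ha.le, by linarith⟩
  have ht₀ : t₀ ∈ Icc (0 : ℝ) 1 := ⟨by linarith, by linarith⟩
  have hpt₀a : p t₀ ≤ p a := hmin ⟨le_rfl, hab.le⟩
  obtain ⟨k, t, hk, ht0, htt₀, heq⟩ := (hfix t₀ ht₀).1
  have hk1 : (1 : ℝ) ≤ k := by exact_mod_cast hk
  have hc_nonneg : 0 ≤ c (t₀ - t) := by
    simpa [hc0] using hc_mono.monotoneOn ⟨le_rfl, zero_le_one⟩ ⟨by linarith, by linarith⟩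
      (by linarith : (0 : ℝ) ≤ t₀ - t)
  have hat : a < t := by
    by_contra! hta
    have hpa := (hfix a ha1).2 ⟨k, t, hk, ht0, hta, rfl⟩
    have hc_lt : c (a - t) < c (t₀ - t) :=
      hc_mono ⟨by linarith, by linarith⟩ ⟨by linarith, by linarith⟩ (by linarith)
    linarith
  have htk := div_natCast_mem_Icc ⟨ht0, htt₀.trans ht₀.2⟩ hk
  have hμt : δ * μ * t ≤ p t₀ :=
    calc δ * μ * t = δ * k * (μ * (t / k)) := by field_simp
      _ ≤ δ * k * p (t / k) := by gcongr; exact (hp_bounds _ htk).1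
      _ ≤ p t₀ := by rw [heq]; linarith [hg k hk]
  refine ⟨?_, k, ?_, t, hat, htt₀.trans ht₀b, ?_⟩
  · calc δ * μ * a < δ * μ * t := by gcongr
      _ ≤ c a := by linarith [(hp_bounds a ha1).2]
  · by_contra! hk2
    obtain rfl : k = 1 := by omega
    have hpt : p t₀ ≤ p t := hmin ⟨hat.le, htt₀.trans ht₀b⟩
    have hpos : 0 < p t₀ := lt_of_lt_of_le (mul_pos (mul_pos (by linarith) hμ) (by linarith)) hμt
    simp only [Nat.cast_one, mul_one, div_one] at heq
    nlinarith [hg 1 le_rfl]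
  · have hpa := (hfix a ha1).2 ⟨k, a, hk, ha.le, le_rfl, rfl⟩
    rw [sub_self, hc0] at hpa
    exact le_of_mul_le_mul_left (a := δ * k) (by linarith) (mul_pos (by linarith) (by linarith))

end Tmap

theorem equilibrium_price_strictMono_general (c : ℝ → ℝ) (g : ℕ → ℝ) (δ : ℝ)
(hc_diff : DifferentiableOn ℝ c (Set.Icc 0 1))
    (hc_mono : StrictMonoOn c (Set.Icc 0 1))
    (hc0 : c 0 = 0) (hc'0 : 0 < deriv c 0)
    (hg_nonneg : ∀ k : ℕ, 1 ≤ k → 0 ≤ g k)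
    (hg_top : Tendsto g atTop atTop)
    (hδ : 1 < δ)
    (pstar : ℝ → ℝ)
    (hp_cont : ContinuousOn pstar (Set.Icc 0 1))
    (hp_mem : ∀ s ∈ Set.Icc (0 : ℝ) 1, deriv c 0 * s ≤ pstar s ∧ pstar s ≤ c s)
    (hp_fix : ∀ s ∈ Set.Icc (0 : ℝ) 1, Tmap c g δ pstar s = pstar s) :
    ∀ s₁ ∈ Set.Icc (0 : ℝ) 1, ∀ s₂ ∈ Set.Icc (0 : ℝ) 1, s₁ < s₂ → pstar s₁ < pstar s₂ := by
  have hc_nonneg : ∀ x ∈ Icc (0 : ℝ) 1, 0 ≤ c x := fun x hx =>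
    hc0 ▸ hc_mono.monotoneOn ⟨le_rfl, zero_le_one⟩ hx hx.1
  have hfix : ∀ s ∈ Icc (0 : ℝ) 1, IsLeast (TmapCandidates c g δ pstar s) (pstar s) :=
    fun s hs => hp_fix s hs ▸ isLeast_Tmap hc_diff.continuousOn hc_nonneg hg_top (by linarith)
      hp_cont (fun x hx => (mul_nonneg hc'0.le hx.1).trans (hp_mem x hx).1) hs
  have descent {a b : ℝ} := descent_of_isLeast hc_mono hc0 hg_nonneg hδ hc'0 hp_cont
    hp_mem hfix (a := a) (b := b)
  set S : ℝ → Prop := fun b => ∃ a, 0 < a ∧ a < b ∧ b ≤ 1 ∧ pstar b ≤ pstar a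
  have halve (b : ℝ) (hb : S b) : ∃ b' ≤ b / 2, S b' := by
    obtain ⟨a, ha, hab, hb1, hpab⟩ := hb
    obtain ⟨-, k, hk, t, hat, htb, hpk⟩ := descent ha hab hb1 hpab
    have htk : t / k ≤ b / 2 := calc
      t / k ≤ b / k := by gcongr
      _ ≤ b / 2 := div_le_div_of_nonneg_left (by linarith) two_pos (by exact_mod_cast hk)
    exact ⟨t / k, htk, a / k, by positivity, by gcongr, by linarith, hpk⟩
  intro s₁ hs₁ s₂ hs₂ h₁₂
  by_contra! hp₂₁
  rcases hs₁.1.eq_or_lt with rfl | hs₁_pos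
  · nlinarith [hp_mem 0 hs₁, hp_mem s₂ hs₂]
  obtain ⟨ε, hε, hsmall⟩ := mem_nhdsGT_iff_exists_Ioo_subset.1 <|
    (differentiableAt_of_deriv_ne_zero hc'0.ne').hasDerivAt.eventually_lt_mul_of_map_zero hc0
      (lt_mul_of_one_lt_left hc'0 hδ)
  obtain ⟨b, hbε, a, ha, hab, hb1, hpab⟩ :=
    exists_lt_of_forall_exists_le_half halve ⟨s₁, hs₁_pos, h₁₂, hs₂.2, hp₂₁⟩ hε
  exact (descent ha hab hb1 hpab).1.not_gt (hsmall ⟨ha, hab.trans hbε⟩)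

theorem equilibrium_price_strictMono (c : ℝ → ℝ) (g : ℕ → ℝ) (δ : ℝ)
(hc_diff : DifferentiableOn ℝ c (Set.Icc 0 1))
    (hc_mono : StrictMonoOn c (Set.Icc 0 1))
    (hc_conv : StrictConvexOn ℝ (Set.Icc 0 1) c)
    (hc0 : c 0 = 0) (hc'0 : 0 < deriv c 0)
    (hg_mono : StrictMonoOn g {k : ℕ | 1 ≤ k})
    (hg1 : g 1 = 0) (hg_nonneg : ∀ k : ℕ, 1 ≤ k → 0 ≤ g k)
    (hg_top : Tendsto g atTop atTop)
    (hδ : 1 < δ)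
    (pstar : ℝ → ℝ)
    (hp_cont : ContinuousOn pstar (Set.Icc 0 1))
    (hp_mem : ∀ s ∈ Set.Icc (0 : ℝ) 1, deriv c 0 * s ≤ pstar s ∧ pstar s ≤ c s)
    (hp_fix : ∀ s ∈ Set.Icc (0 : ℝ) 1, Tmap c g δ pstar s = pstar s) :
    ∀ s₁ ∈ Set.Icc (0 : ℝ) 1, ∀ s₂ ∈ Set.Icc (0 : ℝ) 1, s₁ < s₂ → pstar s₁ < pstar s₂ :=
  equilibrium_price_strictMono_general c g δ hc_diff hc_mono hc0 hc'0 hg_nonneg hg_top hδ pstar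
    hp_cont hp_mem hp_fix
end

section
/- If 1 < δ_a ≤ δ_b, and p*_a, p*_b denote the unique fixed points in [u0, v0] of the operators T_a, T_b obtained by using δ_a and δ_b respectively in the definition of T (with the same c and g), then p*_a(s) ≤ p*_b(s) for all s ∈ [0,1]. -/
open Set Filter Topology

/-!
Suppose `pa s₀ > pb s₀` somewhere. Near `0` both fixed points are squeezed between
`deriv c 0 * s` and `c s`, whose ratio tends to `1`, so the ratio `pb / pa` attains its minimum
`θ < 1` at some `m > 0`, and `θ * pa ≤ pb` on `[0, 1]`. Feeding this into the fixed point equation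
of `pb` gives, for each candidate `(k, t)` of `T_b pb m`, a lower bound `θ * pa m` plus a uniform
margin: `(1 - θ) * c (m - t)` if `t` is far from `m`, `(1 - θ) * g k` if `k ≥ 2`, and, for `k = 1`
and `t` near `m`, the gain from `δa > 1` together with the continuity of `pa`. Hence
`pb m > θ * pa m`, contradicting the choice of `m`.
-/

theorem ContinuousOn.exists_isMinOn_Ioc {r : ℝ → ℝ} {a b s₀ : ℝ} (hr : ContinuousOn r (Ioc a b))
    (hs₀ : s₀ ∈ Ioc a b) (hev : ∀ᶠ s in 𝓝[>] a, r s₀ ≤ r s) :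
    ∃ m ∈ Ioc a b, IsMinOn r (Ioc a b) m := by
  obtain ⟨u, hau, hu⟩ := mem_nhdsGT_iff_exists_Ioo_subset.mp hev
  set σ := min ((a + u) / 2) s₀
  have haσ : a < σ := lt_min (by linarith [mem_Ioi.mp hau]) hs₀.1
  have hσu : σ < u := (min_le_left _ _).trans_lt (by linarith [mem_Ioi.mp hau])
  have hsub : Icc σ b ⊆ Ioc a b := fun x hx => ⟨haσ.trans_le hx.1, hx.2⟩
  have hs₀' : s₀ ∈ Icc σ b := ⟨min_le_right _ _, hs₀.2⟩
  obtain ⟨m, hm, hmin⟩ := isCompact_Icc.exists_isMinOn ⟨s₀, hs₀'⟩ (hr.mono hsub)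
  refine ⟨m, hsub hm, fun x hx => ?_⟩
  rcases le_or_gt σ x with hσx | hxσ
  · exact hmin ⟨hσx, hx.2⟩
  · exact (hmin hs₀' : r m ≤ r s₀).trans (show r s₀ ≤ r x from hu ⟨hx.1, hxσ.trans hσu⟩)

theorem eventually_mul_lt_deriv_mul {c : ℝ → ℝ} (hc0 : c 0 = 0) (hc'0 : 0 < deriv c 0)
    {θ : ℝ} (hθ : θ < 1) : ∀ᶠ s in 𝓝[>] 0, θ * c s < deriv c 0 * s := by
  have hslope : Tendsto (fun s => s⁻¹ * c s) (𝓝[>] 0) (𝓝 (deriv c 0)) := by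
    simpa [hc0] using
      (differentiableAt_of_deriv_ne_zero hc'0.ne').hasDerivAt.tendsto_slope_zero_right
  have hlt : θ * deriv c 0 < deriv c 0 := by nlinarith
  filter_upwards [(hslope.const_mul θ).eventually_lt_const hlt, self_mem_nhdsWithin]
    with s hs (hs0 : 0 < s)
  rw [← mul_assoc, mul_comm θ, mul_assoc, inv_mul_lt_iff₀ hs0] at hs
  linarith

section Tmap

variable {c : ℝ → ℝ} {g : ℕ → ℝ}

theorem nonneg_of_monotoneOn_Icc (hc0 : c 0 = 0) (hc : MonotoneOn c (Icc 0 1)) :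
    ∀ x ∈ Icc (0 : ℝ) 1, 0 ≤ c x := by
  intro x hx
  simpa [hc0] using hc ⟨le_rfl, zero_le_one⟩ hx hx.1

theorem nonneg_of_monotoneOn_one_le (hg1 : g 1 = 0) (hg : MonotoneOn g {k : ℕ | 1 ≤ k}) :
    ∀ k : ℕ, 1 ≤ k → 0 ≤ g k := by
  intro k hk
  simpa [hg1] using hg (show 1 ≤ 1 from le_rfl) hk hk

variable {δ : ℝ} {p : ℝ → ℝ} {s : ℝ}

theorem le_Tmap (hs : 0 ≤ s) {b : ℝ}
    (h : ∀ k : ℕ, ∀ t : ℝ, 1 ≤ k → 0 ≤ t → t ≤ s → b ≤ c (s - t) + g k + δ * k * p (t / k)) :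
    b ≤ Tmap c g δ p s := by
  refine le_csInf ⟨_, 1, 0, le_rfl, le_rfl, hs, rfl⟩ ?_
  rintro y ⟨k, t, hk, ht0, hts, rfl⟩
  exact h k t hk ht0 hts

theorem Tmap_le (hs : s ≤ 1) (hδ : 0 ≤ δ) (hc : ∀ x ∈ Icc (0 : ℝ) 1, 0 ≤ c x)
    (hg : ∀ k : ℕ, 1 ≤ k → 0 ≤ g k) (hp : ∀ x ∈ Icc (0 : ℝ) 1, 0 ≤ p x)
    {k : ℕ} {t : ℝ} (hk : 1 ≤ k) (ht0 : 0 ≤ t) (hts : t ≤ s) :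
    Tmap c g δ p s ≤ c (s - t) + g k + δ * k * p (t / k) := by
  refine csInf_le ⟨0, ?_⟩ ⟨k, t, hk, ht0, hts, rfl⟩
  rintro y ⟨k', t', hk', ht0', hts', rfl⟩
  have hk'1 : (1 : ℝ) ≤ k' := by exact_mod_cast hk'
  have := hc (s - t') ⟨by linarith, by linarith⟩
  have := hp (t' / k') ⟨by positivity, (div_le_self ht0' hk'1).trans (hts'.trans hs)⟩
  have := hg k' hk'
  positivity

theorem mul_add_le_of_Tmap_eq {δa δb θ : ℝ} {pa pb : ℝ → ℝ} (hc : ∀ x ∈ Icc (0 : ℝ) 1, 0 ≤ c x)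
    (hg : ∀ k : ℕ, 1 ≤ k → 0 ≤ g k) (hδa : 0 ≤ δa) (hδab : δa ≤ δb) (hθ : 0 ≤ θ)
    (hpa : ∀ x ∈ Icc (0 : ℝ) 1, 0 ≤ pa x) (hle : ∀ x ∈ Icc (0 : ℝ) 1, θ * pa x ≤ pb x)
    (hs : s ≤ 1) (hpa_fix : Tmap c g δa pa s = pa s)
    {k : ℕ} {t : ℝ} (hk : 1 ≤ k) (ht0 : 0 ≤ t) (hts : t ≤ s) :
    θ * pa s + (1 - θ) * (c (s - t) + g k) ≤ c (s - t) + g k + δb * k * pb (t / k) := by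
  have hk1 : (1 : ℝ) ≤ k := by exact_mod_cast hk
  have htk : t / k ∈ Icc (0 : ℝ) 1 :=
    ⟨div_nonneg ht0 (by positivity), (div_le_self ht0 hk1).trans (hts.trans hs)⟩
  have hpa_le : pa s ≤ c (s - t) + g k + δa * k * pa (t / k) :=
    hpa_fix ▸ Tmap_le hs hδa hc hg hpa hk ht0 hts
  have hpb_ge : δa * k * (θ * pa (t / k)) ≤ δb * k * pb (t / k) :=
    mul_le_mul (by gcongr) (hle _ htk) (mul_nonneg hθ (hpa _ htk))
      (mul_nonneg (hδa.trans hδab) k.cast_nonneg)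
  nlinarith [mul_le_mul_of_nonneg_left hpa_le hθ]

theorem mul_lt_of_Tmap_eq (hc0 : c 0 = 0) (hc_mono : StrictMonoOn c (Icc 0 1))
    (hg1 : g 1 = 0) (hg_mono : StrictMonoOn g {k : ℕ | 1 ≤ k})
    {δa δb θ : ℝ} {pa pb : ℝ → ℝ} (hδa : 1 < δa) (hδab : δa ≤ δb)
    (hpa : ∀ x ∈ Icc (0 : ℝ) 1, 0 ≤ pa x) (hs : s ∈ Ioc (0 : ℝ) 1) (hpa_s : 0 < pa s)
    (hpa_cont : ContinuousWithinAt pa (Icc 0 1) s)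
    (hpa_fix : Tmap c g δa pa s = pa s) (hpb_fix : Tmap c g δb pb s = pb s)
    (hθ0 : 0 < θ) (hθ1 : θ < 1) (hle : ∀ x ∈ Icc (0 : ℝ) 1, θ * pa x ≤ pb x) :
    θ * pa s < pb s := by
  obtain ⟨hs0, hs1⟩ := hs
  have hc := nonneg_of_monotoneOn_Icc hc0 hc_mono.monotoneOn
  have hg := nonneg_of_monotoneOn_one_le hg1 hg_mono.monotoneOn
  have hgain : (1 + δa) / 2 * pa s < δa * pa s := by nlinarith
  obtain ⟨l, ⟨hl0, hls⟩, hnear⟩ := ((TFAE_mem_nhdsLE hs0 _).out 1 3).mp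
    (((hpa_cont.mono (Icc_subset_Icc_right hs1)).const_mul δa).eventually_const_lt hgain)
  have hcl : 0 < c (s - l) :=
    hc0 ▸ hc_mono ⟨le_rfl, zero_le_one⟩ ⟨by linarith, by linarith⟩ (by linarith)
  have hg2 : 0 < g 2 :=
    hg1 ▸ hg_mono (show 1 ≤ 1 from le_rfl) (show 1 ≤ 2 by norm_num) one_lt_two
  have hθ' : 0 ≤ 1 - θ := by linarith
  set margin := min ((1 - θ) * c (s - l)) (min ((1 - θ) * g 2) (θ * ((δa - 1) / 2 * pa s)))
  have hmargin : 0 < margin := lt_min (mul_pos (by linarith) hcl)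
    (lt_min (mul_pos (by linarith) hg2) (mul_pos hθ0 (mul_pos (by linarith) hpa_s)))
  have hm₁ : margin ≤ (1 - θ) * c (s - l) := min_le_left _ _
  have hm₂ : margin ≤ (1 - θ) * g 2 := (min_le_right _ _).trans (min_le_left _ _)
  have hm₃ : margin ≤ θ * ((δa - 1) / 2 * pa s) := (min_le_right _ _).trans (min_le_right _ _)
  suffices θ * pa s + margin ≤ pb s by linarith
  rw [← hpb_fix]
  refine le_Tmap hs0.le fun k t hk ht0 hts => ?_
  have hbase := mul_add_le_of_Tmap_eq (pb := pb) hc hg (by linarith) hδab hθ0.le hpa hle hs1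
    hpa_fix hk ht0 hts
  have hst : s - t ∈ Icc (0 : ℝ) 1 := ⟨by linarith, by linarith⟩
  have hc_st := mul_nonneg hθ' (hc _ hst)
  have hg_k := mul_nonneg hθ' (hg k hk)
  rcases le_or_gt t l with hfar | hclose
  · have : c (s - l) ≤ c (s - t) :=
      hc_mono.monotoneOn ⟨by linarith, by linarith⟩ hst (by linarith)
    linarith [mul_le_mul_of_nonneg_left this hθ']
  rcases hk.eq_or_lt with rfl | hk2
  · have ht : t ∈ Icc (0 : ℝ) 1 := ⟨ht0, hts.trans hs1⟩
    have hpb_t : δa * (θ * pa t) ≤ δb * pb t :=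
      mul_le_mul hδab (hle t ht) (mul_nonneg hθ0.le (hpa t ht)) (by linarith)
    have hpa_t : (1 + δa) / 2 * pa s < δa * pa t := hnear ⟨hclose, hts⟩
    simp only [Nat.cast_one, mul_one, div_one, hg1]
    nlinarith [hc _ hst, mul_lt_mul_of_pos_left hpa_t hθ0]
  · have : g 2 ≤ g k := hg_mono.monotoneOn (show 1 ≤ 2 by norm_num) hk hk2
    linarith [mul_le_mul_of_nonneg_left this hθ']

end Tmap

theorem exists_lt_one_mul_le_of_lt {c pa pb : ℝ → ℝ} (hc0 : c 0 = 0) (hc'0 : 0 < deriv c 0)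
    (hpa_cont : ContinuousOn pa (Icc 0 1)) (hpb_cont : ContinuousOn pb (Icc 0 1))
    (hpa_mem : ∀ s ∈ Icc (0 : ℝ) 1, deriv c 0 * s ≤ pa s ∧ pa s ≤ c s)
    (hpb_lower : ∀ s ∈ Icc (0 : ℝ) 1, deriv c 0 * s ≤ pb s)
    {s₀ : ℝ} (hs₀ : s₀ ∈ Icc (0 : ℝ) 1) (hlt : pb s₀ < pa s₀) :
    ∃ θ, 0 < θ ∧ θ < 1 ∧ ∃ m ∈ Ioc (0 : ℝ) 1, pb m = θ * pa m ∧
      ∀ x ∈ Icc (0 : ℝ) 1, θ * pa x ≤ pb x := by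
  have hpa_pos : ∀ x ∈ Ioc (0 : ℝ) 1, 0 < pa x := fun x hx =>
    (mul_pos hc'0 hx.1).trans_le (hpa_mem x (Ioc_subset_Icc_self hx)).1
  have hpb_pos : ∀ x ∈ Ioc (0 : ℝ) 1, 0 < pb x := fun x hx =>
    (mul_pos hc'0 hx.1).trans_le (hpb_lower x (Ioc_subset_Icc_self hx))
  have hpa0 : pa 0 ≤ 0 := by simpa [hc0] using (hpa_mem 0 ⟨le_rfl, zero_le_one⟩).2
  have hpb0 : 0 ≤ pb 0 := by simpa using hpb_lower 0 ⟨le_rfl, zero_le_one⟩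
  have hs₀' : s₀ ∈ Ioc (0 : ℝ) 1 := ⟨hs₀.1.lt_of_ne (by rintro rfl; linarith), hs₀.2⟩
  set r := fun x => pb x / pa x
  have hr : ContinuousOn r (Ioc 0 1) :=
    (hpb_cont.mono Ioc_subset_Icc_self).div (hpa_cont.mono Ioc_subset_Icc_self)
      fun x hx => (hpa_pos x hx).ne'
  have hr₀ : r s₀ < 1 := (div_lt_one (hpa_pos s₀ hs₀')).2 hlt
  have hev : ∀ᶠ s in 𝓝[>] 0, r s₀ ≤ r s := by
    filter_upwards [eventually_mul_lt_deriv_mul hc0 hc'0 hr₀, Ioc_mem_nhdsGT zero_lt_one]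
      with s hs hs01
    rw [le_div_iff₀ (hpa_pos s hs01)]
    calc r s₀ * pa s ≤ r s₀ * c s :=
          mul_le_mul_of_nonneg_left (hpa_mem s (Ioc_subset_Icc_self hs01)).2
            (div_pos (hpb_pos s₀ hs₀') (hpa_pos s₀ hs₀')).le
      _ ≤ deriv c 0 * s := hs.le
      _ ≤ pb s := hpb_lower s (Ioc_subset_Icc_self hs01)
  obtain ⟨m, hm, hmin⟩ := hr.exists_isMinOn_Ioc hs₀' hev
  have hθ : 0 < r m := div_pos (hpb_pos m hm) (hpa_pos m hm)
  refine ⟨r m, hθ, (hmin hs₀' : r m ≤ r s₀).trans_lt hr₀, m, hm,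
    (div_mul_cancel₀ _ (hpa_pos m hm).ne').symm, fun x hx => ?_⟩
  rcases hx.1.eq_or_lt with rfl | hx0
  · exact (mul_nonpos_of_nonneg_of_nonpos hθ.le hpa0).trans hpb0
  · exact (le_div_iff₀ (hpa_pos x ⟨hx0, hx.2⟩)).1 (hmin ⟨hx0, hx.2⟩)

theorem price_monotone_in_delta_general (c : ℝ → ℝ) (g : ℕ → ℝ) (δa δb : ℝ)
    (hc_mono : StrictMonoOn c (Set.Icc 0 1))
    (hc0 : c 0 = 0) (hc'0 : 0 < deriv c 0)
    (hg_mono : StrictMonoOn g {k : ℕ | 1 ≤ k})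
    (hg1 : g 1 = 0)
    (hδa : 1 < δa) (hδab : δa ≤ δb)
    (pa pb : ℝ → ℝ)
    (hpa_cont : ContinuousOn pa (Set.Icc 0 1))
    (hpa_mem : ∀ s ∈ Set.Icc (0 : ℝ) 1, deriv c 0 * s ≤ pa s ∧ pa s ≤ c s)
    (hpa_fix : ∀ s ∈ Set.Icc (0 : ℝ) 1, Tmap c g δa pa s = pa s)
    (hpb_cont : ContinuousOn pb (Set.Icc 0 1))
    (hpb_mem : ∀ s ∈ Set.Icc (0 : ℝ) 1, deriv c 0 * s ≤ pb s ∧ pb s ≤ c s)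
    (hpb_fix : ∀ s ∈ Set.Icc (0 : ℝ) 1, Tmap c g δb pb s = pb s) :
    ∀ s ∈ Set.Icc (0 : ℝ) 1, pa s ≤ pb s := by
  intro s hs
  by_contra! hlt
  obtain ⟨θ, hθ0, hθ1, m, hm, hpb_m, hle⟩ := exists_lt_one_mul_le_of_lt hc0 hc'0 hpa_cont
    hpb_cont hpa_mem (fun x hx => (hpb_mem x hx).1) hs hlt
  have hm' : m ∈ Icc (0 : ℝ) 1 := Ioc_subset_Icc_self hm
  have hpa_nonneg : ∀ x ∈ Icc (0 : ℝ) 1, 0 ≤ pa x := fun x hx =>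
    (mul_nonneg hc'0.le hx.1).trans (hpa_mem x hx).1
  have hpa_m : 0 < pa m := (mul_pos hc'0 hm.1).trans_le (hpa_mem m hm').1
  have := mul_lt_of_Tmap_eq hc0 hc_mono hg1 hg_mono hδa hδab hpa_nonneg hm hpa_m (hpa_cont m hm')
    (hpa_fix m hm') (hpb_fix m hm') hθ0 hθ1 hle
  linarith

theorem price_monotone_in_delta (c : ℝ → ℝ) (g : ℕ → ℝ) (δa δb : ℝ)
    (hc_diff : DifferentiableOn ℝ c (Set.Icc 0 1))
    (hc_mono : StrictMonoOn c (Set.Icc 0 1))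
    (hc_conv : StrictConvexOn ℝ (Set.Icc 0 1) c)
    (hc0 : c 0 = 0) (hc'0 : 0 < deriv c 0)
    (hg_mono : StrictMonoOn g {k : ℕ | 1 ≤ k})
    (hg1 : g 1 = 0) (hg_nonneg : ∀ k : ℕ, 1 ≤ k → 0 ≤ g k)
    (hg_top : Tendsto g atTop atTop)
    (hδa : 1 < δa) (hδab : δa ≤ δb)
    (pa pb : ℝ → ℝ)
    (hpa_cont : ContinuousOn pa (Set.Icc 0 1))
    (hpa_mem : ∀ s ∈ Set.Icc (0 : ℝ) 1, deriv c 0 * s ≤ pa s ∧ pa s ≤ c s)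
    (hpa_fix : ∀ s ∈ Set.Icc (0 : ℝ) 1, Tmap c g δa pa s = pa s)
    (hpb_cont : ContinuousOn pb (Set.Icc 0 1))
    (hpb_mem : ∀ s ∈ Set.Icc (0 : ℝ) 1, deriv c 0 * s ≤ pb s ∧ pb s ≤ c s)
    (hpb_fix : ∀ s ∈ Set.Icc (0 : ℝ) 1, Tmap c g δb pb s = pb s) :
    ∀ s ∈ Set.Icc (0 : ℝ) 1, pa s ≤ pb s :=
  price_monotone_in_delta_general c g δa δb hc_mono hc0 hc'0 hg_mono hg1 hδa hδab pa pb hpa_cont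
    hpa_mem hpa_fix hpb_cont hpb_mem hpb_fix
end
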